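/- For g ≥ 1 odd and i ≥ 0 the following hold: (i) there exists u ∈ ℂ[α,γ] which is a unit modulo J_g^- such that u·γ^i ζ_{g−2i−1}^- ≡ γ^{i+1} ζ_{g−2i−2}^- (mod J_g^-); (ii) there exists v ∈ ℂ[α,γ] which is a unit modulo J_g^- such that v·γ^i ζ_{g−2i−1}^- ≡ γ^{i+1} ζ_{g−2i−3}^- (mod J_g^-). -/
import Mathlib


open MvPolynomial

/-- ζ_k^- ∈ ℂ[α,γ] (variables: X 0 = α, X 1 = γ):
    ζ_{k+1}^- = α ζ_k^- + 2k(k−1) γ ζ_{k−2}^- for k even, and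
    ζ_{k+1}^- = α ζ_k^- − 16k² ζ_{k−1}^- + 2k(k−1) γ ζ_{k−2}^- for k odd. -/
noncomputable def zm : ℕ → MvPolynomial (Fin 2) ℂ
  | 0 => 1
  | 1 => X 0
  | 2 => X 0 * zm 1 - C 16 * zm 0
  | (n + 3) =>
      if n % 2 = 0 then
        X 0 * zm (n + 2) + C (2 * ((n : ℂ) + 2) * ((n : ℂ) + 1)) * X 1 * zm n
      else
        X 0 * zm (n + 2) - C (16 * ((n : ℂ) + 2) ^ 2) * zm (n + 1)
          + C (2 * ((n : ℂ) + 2) * ((n : ℂ) + 1)) * X 1 * zm n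

/-- ζ_k^- for an integer index k, with ζ_k^- = 0 for k < 0. -/
noncomputable def zmZ (k : ℤ) : MvPolynomial (Fin 2) ℂ :=
  if k < 0 then 0 else zm k.toNat

/-- J_g^- = (ζ_g^-, ζ_{g+1}^-, ζ_{g+2}^-) ⊆ ℂ[α,γ]. -/
noncomputable def Jm (g : ℕ) : Ideal (MvPolynomial (Fin 2) ℂ) :=
  Ideal.span {zm g, zm (g + 1), zm (g + 2)}

lemma zm_zero : zm 0 = 1 := rfl
lemma zm_one : zm 1 = X 0 := rfl
lemma zm_two : zm 2 = X 0 * X 0 - C 16 := by rw [zm, zm_one, zm_zero]; ring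

lemma zm_O (k : ℕ) : zm (2*k+3)
    = X 0 * zm (2*k+2) + C (2*(2*(k:ℂ)+2)*(2*(k:ℂ)+1)) * X 1 * zm (2*k) := by
  rw [show 2*k+3 = (2*k)+3 from rfl, zm, if_pos (by omega)]
  push_cast
  simp only [C_add, C_mul, C_pow, map_ofNat, map_one]
  try ring

lemma zm_E (k : ℕ) : zm (2*k+4)
    = X 0 * zm (2*k+3) - C (16*(2*(k:ℂ)+3)^2) * zm (2*k+2)
      + C (2*(2*(k:ℂ)+3)*(2*(k:ℂ)+2)) * X 1 * zm (2*k+1) := by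
  rw [show 2*k+4 = (2*k+1)+3 from rfl, zm, if_neg (by omega)]
  push_cast
  simp only [C_add, C_mul, C_pow, map_ofNat, map_one]
  try ring

lemma zm_EE1 : zm 4 = (X 0^2 - C 144) * zm 2 + C 16 * X 0 * X 1 := by
  have h1 := zm_E 0
  have h2 := zm_O 0
  norm_num at h1 h2
  rw [show (4:ℕ) = 2*0+4 from rfl, zm_E 0]
  rw [show (3:ℕ) = 2*0+3 from rfl] at h2 ⊢
  rw [h2, zm_zero, zm_one]
  norm_num
  simp only [map_ofNat]
  ring

lemma zm_EE (k : ℕ) : zm (2*k+6)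
    = (X 0^2 - C (16*(2*(k:ℂ)+5)^2)) * zm (2*k+4)
      + C (16*((k:ℂ)+2)^2) * X 0 * X 1 * zm (2*k+2)
      + C (16*((k:ℂ)+1)*((k:ℂ)+2)*(2*(k:ℂ)+5)*(2*(k:ℂ)+1)) * X 1^2 * zm (2*k) := by
  have hE : zm (2*k+6) = X 0 * zm (2*k+5) - C (16*(2*(k:ℂ)+5)^2) * zm (2*k+4)
      + C (2*(2*(k:ℂ)+5)*(2*(k:ℂ)+4)) * X 1 * zm (2*k+3) := by
    have := zm_E (k+1)
    push_cast at this
    rw [show 2*(k+1)+4 = 2*k+6 from by ring, show 2*(k+1)+3 = 2*k+5 from by ring,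
      show 2*(k+1)+2 = 2*k+4 from by ring, show 2*(k+1)+1 = 2*k+3 from by ring] at this
    convert this using 3 <;> ring
  have hO5 : zm (2*k+5) = X 0 * zm (2*k+4) + C (2*(2*(k:ℂ)+4)*(2*(k:ℂ)+3)) * X 1 * zm (2*k+2) := by
    have := zm_O (k+1)
    push_cast at this
    rw [show 2*(k+1)+3 = 2*k+5 from by ring, show 2*(k+1)+2 = 2*k+4 from by ring,
      show 2*(k+1) = 2*k+2 from by ring] at this
    convert this using 3 <;> ring
  have hO3 := zm_O k
  rw [hE, hO5, hO3]
  simp only [C_add, C_mul, C_pow, map_ofNat, map_one]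
  try ring
-- certificate polynomials (univariate over ℤ) and constants
noncomputable def Pq (h : ℕ) : ℕ → Polynomial ℤ
  | 0 => 1
  | 1 => Polynomial.C (2*(h:ℤ)+3) * Polynomial.X
  | (j+2) => Polynomial.C ((2*((h:ℤ)-j)-1)*(2*((h:ℤ)-j)+3)) *
        (Polynomial.C (16*(2*((h:ℤ)-j)+1)^2) - Polynomial.X^2) * Pq h j
      + Polynomial.C (4*((h:ℤ)-j)) * Polynomial.X * Pq h (j+1)

def Lq (h : ℕ) : ℕ → ℤ
  | 0 => 1
  | (j+1) => (4*((h:ℤ)-j))*(2*((h:ℤ)-j)-1)*(2*((h:ℤ)-j)+3) * Lq h j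

noncomputable def Phi : Polynomial ℤ →+* MvPolynomial (Fin 2) ℂ :=
  Polynomial.eval₂RingHom ((C : ℂ →+* _).comp (Int.castRingHom ℂ)) (X 0)

lemma Phi_C (a : ℤ) : Phi (Polynomial.C a) = C ((a:ℂ)) := by
  simp [Phi]

lemma Phi_X : Phi Polynomial.X = X 0 := by simp [Phi]

lemma Lq_pos (h : ℕ) : ∀ j, j ≤ h → 0 < Lq h j := by
  intro j
  induction j with
  | zero => intro _; norm_num [Lq]
  | succ n ih =>
    intro hn
    rw [Lq]
    have h1 : (n:ℤ) < (h:ℤ) := by exact_mod_cast hn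
    have f1 : (0:ℤ) < 4*((h:ℤ)-n) := by omega
    have f2 : (0:ℤ) < 2*((h:ℤ)-n)-1 := by omega
    have f3 : (0:ℤ) < 2*((h:ℤ)-n)+3 := by omega
    exact mul_pos (mul_pos (mul_pos f1 f2) f3) (ih (by omega))

lemma mem_of_C_mul {I : Ideal (MvPolynomial (Fin 2) ℂ)} {c : ℂ} (hc : c ≠ 0)
    {x : MvPolynomial (Fin 2) ℂ} (h : C c * x ∈ I) : x ∈ I := by
  have hx : x = C c⁻¹ * (C c * x) := by
    rw [← mul_assoc, ← C_mul, inv_mul_cancel₀ hc, C_1, one_mul]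
  rw [hx]; exact I.mul_mem_left _ h

lemma gen1 (h : ℕ) : zm (2*h+1) ∈ Jm (2*h+1) :=
  Ideal.subset_span (by simp)
lemma gen2 (h : ℕ) : zm (2*h+2) ∈ Jm (2*h+1) :=
  Ideal.subset_span (by simp [show 2*h+1+1 = 2*h+2 from rfl])
lemma gen3 (h : ℕ) : zm (2*h+3) ∈ Jm (2*h+1) :=
  Ideal.subset_span (by simp [show 2*h+1+2 = 2*h+3 from rfl])

/-- F0 : γ·e_h ∈ J -/
lemma F0 (h : ℕ) : X 1 * zm (2*h) ∈ Jm (2*h+1) := by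
  apply mem_of_C_mul (c := ((2*(2*h+2)*(2*h+1) : ℕ) : ℂ))
    (Nat.cast_ne_zero.mpr (by positivity))
  have key : C (((2*(2*h+2)*(2*h+1) : ℕ) : ℂ)) * (X 1 * zm (2*h))
      = zm (2*h+3) - X 0 * zm (2*h+2) := by
    rw [zm_O h]; push_cast; ring
  rw [key]
  exact (Jm (2*h+1)).sub_mem (gen3 h) ((Jm (2*h+1)).mul_mem_left _ (gen2 h))

def MemP (h j : ℕ) : Prop :=
  C ((-1)^j * (Lq h j : ℂ)) * (X 1)^j * zm (2*(h-j)) - Phi (Pq h j) * zm (2*h) ∈ Jm (2*h+1)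

lemma memP_zero (h : ℕ) : MemP h 0 := by
  unfold MemP
  simp [Lq, Pq]

lemma gx_of_mem (h j : ℕ) (hj : j ≤ h) (m : MemP h j) :
    X 1^(j+1) * zm (2*(h-j)) ∈ Jm (2*h+1) := by
  apply mem_of_C_mul (c := (-1)^j * (Lq h j : ℂ)) (by
    have := Lq_pos h j hj
    simp only [ne_eq, mul_eq_zero, pow_eq_zero_iff, not_or]
    constructor
    · intro hcon; simp at hcon
    · exact_mod_cast this.ne')
  have key : C ((-1)^j * (Lq h j : ℂ)) * (X 1^(j+1) * zm (2*(h-j)))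
      = X 1 * (C ((-1)^j * (Lq h j : ℂ)) * (X 1)^j * zm (2*(h-j)) - Phi (Pq h j) * zm (2*h))
        + Phi (Pq h j) * (X 1 * zm (2*h)) := by ring
  rw [key]
  exact (Jm _).add_mem ((Jm _).mul_mem_left _ m) ((Jm _).mul_mem_left _ (F0 h))

lemma memP_one (h k : ℕ) (hk : h = k+1) : MemP h 1 := by
  subst hk
  unfold MemP
  have hL : (Lq (k+1) 1 : ℂ) = (4*(k:ℂ)+4)*(2*(k:ℂ)+1)*(2*(k:ℂ)+5) := by
    simp [Lq]; push_cast; ring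
  have hP : Phi (Pq (k+1) 1) = C (2*(k:ℂ)+5) * X 0 := by
    simp only [Pq, map_mul, Phi_C, Phi_X]
    push_cast; ring
  have hidx : 2*(k+1-1) = 2*k := by omega
  rw [hidx, hL, hP]
  have key : C ((-1)^1 * ((4*(k:ℂ)+4)*(2*(k:ℂ)+1)*(2*(k:ℂ)+5))) * X 1 ^ 1 * zm (2*k)
      - C (2*(k:ℂ)+5) * X 0 * zm (2*(k+1))
      = C (-(2*(k:ℂ)+5)) * zm (2*k+3) := by
    rw [zm_O k, show 2*(k+1) = 2*k+2 from by ring]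
    simp only [C_add, C_mul, C_pow, map_ofNat, map_neg, map_one]
    ring
  rw [key]
  exact (Jm _).mul_mem_left _ (by
    have := gen1 (k+1)
    rwa [show 2*(k+1)+1 = 2*k+3 from by ring] at this)

lemma memP_step (h j c : ℕ) (hc : h = j+c+2)
    (m0 : MemP h j) (m1 : MemP h (j+1))
    (t1 : X 1^j * zm (2*(h-j)+2) ∈ Jm (2*h+1)) : MemP h (j+2) := by
  subst hc
  have e0 : (j+c+2) - j = c + 2 := by omega
  have e1 : (j+c+2) - (j+1) = c + 1 := by omega
  have e2 : (j+c+2) - (j+2) = c := by omega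
  unfold MemP at m0 m1 ⊢
  rw [e0] at m0 t1
  rw [e1] at m1
  rw [e2]
  have hL1 : (Lq (j+c+2) (j+1) : ℂ) = (4*(c:ℂ)+8)*(2*(c:ℂ)+3)*(2*(c:ℂ)+7) * (Lq (j+c+2) j : ℂ) := by
    rw [Lq]
    push_cast
    ring
  have hL2 : (Lq (j+c+2) (j+2) : ℂ)
      = (4*(c:ℂ)+4)*(2*(c:ℂ)+1)*(2*(c:ℂ)+5) * ((4*(c:ℂ)+8)*(2*(c:ℂ)+3)*(2*(c:ℂ)+7)) * (Lq (j+c+2) j : ℂ) := by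
    rw [show j+2 = (j+1)+1 from rfl, Lq, Lq]
    push_cast
    ring
  have hP2 : Phi (Pq (j+c+2) (j+2))
      = C ((2*(c:ℂ)+3)*(2*(c:ℂ)+7)) * (C (16*(2*(c:ℂ)+5)^2) - (X 0)^2) * Phi (Pq (j+c+2) j)
        + C (4*(c:ℂ)+8) * X 0 * Phi (Pq (j+c+2) (j+1)) := by
    rw [Pq, show ((j+c+2 : ℕ) : ℤ) - (j : ℕ) = (c : ℤ) + 2 from by push_cast; ring]
    simp only [map_add, map_mul, map_sub, map_pow, Phi_C, Phi_X]
    push_cast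
    simp only [C_add, C_mul, C_pow, map_ofNat, map_one, map_neg]
    ring
  have key : C ((-1)^(j+2) * (Lq (j+c+2) (j+2) : ℂ)) * X 1^(j+2) * zm (2*c) - Phi (Pq (j+c+2) (j+2)) * zm (2*(j+c+2))
      = C ((-1)^j * ((2*(c:ℂ)+3)*(2*(c:ℂ)+7)) * (Lq (j+c+2) j : ℂ)) * (X 1^j * zm (2*(c+2)+2))
        - C ((2*(c:ℂ)+3)*(2*(c:ℂ)+7)) * ((X 0)^2 - C (16*(2*(c:ℂ)+5)^2)) *
            (C ((-1)^j * (Lq (j+c+2) j : ℂ)) * X 1^j * zm (2*(c+2)) - Phi (Pq (j+c+2) j) * zm (2*(j+c+2)))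
        + C (4*(c:ℂ)+8) * X 0 *
            (C ((-1)^(j+1) * (Lq (j+c+2) (j+1) : ℂ)) * X 1^(j+1) * zm (2*(c+1)) - Phi (Pq (j+c+2) (j+1)) * zm (2*(j+c+2))) := by
    rw [hP2, hL2, hL1,
      show 2*(c+2)+2 = 2*c+6 from by ring, show 2*(c+2) = 2*c+4 from by ring,
      show 2*(c+1) = 2*c+2 from by ring, zm_EE c]
    simp only [C_add, C_mul, C_pow, map_ofNat, map_neg, map_one, pow_succ]
    ring
  rw [key]
  rw [show 2*(c+2)+2 = 2*(c+2)+2 from rfl]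
  refine (Jm _).add_mem ((Jm _).sub_mem ((Jm _).mul_mem_left _ ?_) ((Jm _).mul_mem_left _ m0)) ((Jm _).mul_mem_left _ m1)
  exact t1

lemma bundle (h : ℕ) (hh : 1 ≤ h) : ∀ j, j + 1 ≤ h →
    ((MemP h j ∧ X 1^j * zm (2*(h-j)+2) ∈ Jm (2*h+1)) ∧
     (MemP h (j+1) ∧ X 1^(j+1) * zm (2*(h-(j+1))+2) ∈ Jm (2*h+1))) := by
  intro j
  induction j with
  | zero =>
    intro _
    refine ⟨⟨memP_zero h, ?_⟩, ⟨memP_one h (h-1) (by omega), ?_⟩⟩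
    · rw [Nat.sub_zero, pow_zero, one_mul]
      exact gen2 h
    · rw [show 2*(h-(0+1))+2 = 2*h from by omega, pow_one]
      exact F0 h
  | succ n ih =>
    intro hn
    have prev := ih (by omega)
    refine ⟨prev.2, ⟨?_, ?_⟩⟩
    · exact memP_step h n (h-n-2) (by omega) prev.1.1 prev.2.1 prev.1.2
    · rw [show 2*(h-(n+1+1))+2 = 2*(h-(n+1)) from by omega]
      exact gx_of_mem h (n+1) (by omega) prev.2.1
  
lemma memP_all (h : ℕ) (hh : 1 ≤ h) : ∀ j, j ≤ h → MemP h j := by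
  intro j hj
  rcases Nat.eq_zero_or_pos j with rfl | hj0
  · exact memP_zero h
  · obtain ⟨n, rfl⟩ : ∃ n, j = n + 1 := ⟨j-1, by omega⟩
    exact (bundle h hh n (by omega)).2.1

lemma f2_rel (k : ℕ) :
    Phi ((Polynomial.X^2 - Polynomial.C 16) * Pq (k+1) (k+1)) * zm (2*(k+1)) ∈ Jm (2*(k+1)+1) := by
  have mh := memP_all (k+1) (by omega) (k+1) le_rfl
  unfold MemP at mh
  have g2 : X 1^(k+1) * zm 2 ∈ Jm (2*(k+1)+1) := by
    have := gx_of_mem (k+1) k (by omega) (memP_all (k+1) (by omega) k (by omega))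
    rwa [show 2*(k+1-k) = 2 from by omega] at this
  have key : Phi ((Polynomial.X^2 - Polynomial.C 16) * Pq (k+1) (k+1)) * zm (2*(k+1))
      = C ((-1)^(k+1)*(Lq (k+1) (k+1):ℂ)) * (X 1^(k+1) * zm 2)
        - (X 0^2 - C 16) *
          (C ((-1)^(k+1)*(Lq (k+1) (k+1):ℂ)) * X 1^(k+1) * zm (2*(k+1-(k+1))) - Phi (Pq (k+1) (k+1)) * zm (2*(k+1))) := by
    rw [show 2*(k+1-(k+1)) = 0 from by omega, zm_zero, zm_two]
    simp only [map_mul, map_sub, map_pow, Phi_C, Phi_X]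
    push_cast
    simp only [map_ofNat]
    ring
  rw [key]
  exact (Jm _).sub_mem ((Jm _).mul_mem_left _ g2) ((Jm _).mul_mem_left _ mh)

lemma x1zm4 (k : ℕ) : X 1^k * zm 4 ∈ Jm (2*(k+1)+1) := by
  rcases Nat.eq_zero_or_pos k with rfl | hk
  · rw [pow_zero, one_mul]
    have := gen2 1
    norm_num at this ⊢
    exact this
  · have := gx_of_mem (k+1) (k-1) (by omega) (memP_all (k+1) (by omega) (k-1) (by omega))
    rwa [show (k-1)+1 = k from by omega, show 2*(k+1-(k-1)) = 4 from by omega] at this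

lemma Lq_top (k : ℕ) : (Lq (k+1) (k+1) : ℂ) = 20 * (Lq (k+1) k : ℂ) := by
  rw [Lq]
  push_cast
  ring

lemma f1_rel (k : ℕ) :
    Phi (Polynomial.C 16 * Polynomial.X * Pq (k+1) (k+1)
        - Polynomial.C 20 * (Polynomial.X^2 - Polynomial.C 144) * Pq (k+1) k) * zm (2*(k+1))
      ∈ Jm (2*(k+1)+1) := by
  have mh := memP_all (k+1) (by omega) (k+1) le_rfl
  have mk' := memP_all (k+1) (by omega) k (by omega)
  unfold MemP at mh mk'
  have key : Phi (Polynomial.C 16 * Polynomial.X * Pq (k+1) (k+1)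
        - Polynomial.C 20 * (Polynomial.X^2 - Polynomial.C 144) * Pq (k+1) k) * zm (2*(k+1))
      = C ((-1)^(k+1) * 20 * (Lq (k+1) k : ℂ)) * (X 1^k * zm 4)
        - C 16 * X 0 *
          (C ((-1)^(k+1)*(Lq (k+1) (k+1):ℂ)) * X 1^(k+1) * zm (2*(k+1-(k+1))) - Phi (Pq (k+1) (k+1)) * zm (2*(k+1)))
        + C 20 * (X 0^2 - C 144) *
          (C ((-1)^k*(Lq (k+1) k:ℂ)) * X 1^k * zm (2*(k+1-k)) - Phi (Pq (k+1) k) * zm (2*(k+1))) := by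
    rw [show 2*(k+1-(k+1)) = 0 from by omega, zm_zero,
      show 2*(k+1-k) = 2 from by omega, zm_EE1, Lq_top]
    simp only [map_mul, map_sub, map_pow, Phi_C, Phi_X]
    push_cast
    simp only [map_ofNat, pow_succ, map_neg, map_one, C_mul]
    ring
  rw [key]
  exact (Jm _).add_mem ((Jm _).sub_mem ((Jm _).mul_mem_left _ (x1zm4 k)) ((Jm _).mul_mem_left _ mh))
    ((Jm _).mul_mem_left _ mk')

-- evaluation lemmas for Pq over any commutative ring
lemma aeval_Pq_zero {A : Type*} [CommRing A] (h : ℕ) (x : A) :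
    Polynomial.aeval x (Pq h 0) = 1 := by simp [Pq]

lemma aeval_Pq_one {A : Type*} [CommRing A] (h : ℕ) (x : A) :
    Polynomial.aeval x (Pq h 1) = (2*(h:ℤ)+3 : ℤ) * x := by
  simp [Pq, map_ofNat]
  try push_cast
  try ring

lemma aeval_Pq_rec {A : Type*} [CommRing A] (h j : ℕ) (x : A) :
    Polynomial.aeval x (Pq h (j+2))
      = (((2*((h:ℤ)-j)-1)*(2*((h:ℤ)-j)+3) : ℤ) : A)
          * (((16*(2*((h:ℤ)-j)+1)^2 : ℤ) : A) - x^2) * Polynomial.aeval x (Pq h j)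
        + ((4*((h:ℤ)-j) : ℤ) : A) * x * Polynomial.aeval x (Pq h (j+1)) := by
  rw [Pq]
  simp [map_add, map_mul, map_sub, map_pow, map_ofNat]
  try push_cast
  try ring

-- transfer: evaluation at a real point, complex vs real
lemma aeval_ofReal (p : Polynomial ℤ) (t : ℝ) :
    Polynomial.aeval ((t:ℂ)) p = ((Polynomial.aeval t p : ℝ) : ℂ) := by
  rw [Polynomial.aeval_def, Polynomial.aeval_def, Polynomial.eval₂_eq_eval_map,
    Polynomial.eval₂_eq_eval_map]
  have hm : (p.map (algebraMap ℤ ℂ)) = (p.map (algebraMap ℤ ℝ)).map Complex.ofRealHom := by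
    rw [Polynomial.map_map]
    congr 1
    try exact Subsingleton.elim _ _
  rw [hm, ← Complex.ofRealHom_eq_coe, Polynomial.eval_map, Polynomial.eval₂_at_apply]
  try simp

-- parity
lemma Pq_parity {A : Type*} [CommRing A] (h : ℕ) (x : A) :
    ∀ j, Polynomial.aeval (-x) (Pq h j) = (-1)^j * Polynomial.aeval x (Pq h j) := by
  have key : ∀ j, Polynomial.aeval (-x) (Pq h j) = (-1)^j * Polynomial.aeval x (Pq h j) ∧
      Polynomial.aeval (-x) (Pq h (j+1)) = (-1)^(j+1) * Polynomial.aeval x (Pq h (j+1)) := by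
    intro j
    induction j with
    | zero => constructor <;> simp [aeval_Pq_zero, aeval_Pq_one]
    | succ n ih =>
      refine ⟨ih.2, ?_⟩
      rw [aeval_Pq_rec, aeval_Pq_rec, ih.1, ih.2]
      ring
  exact fun j => (key j).1

-- positivity and dominance over ℝ
lemma Pq_posdom (h : ℕ) (hh : 1 ≤ h) (t : ℝ) (ht : 0 < t) :
    ∀ j, j + 1 ≤ h →
      (0 < Polynomial.aeval t (Pq h j)
       ∧ (2*((h:ℝ)-j)+3) * t * Polynomial.aeval t (Pq h j) ≤ Polynomial.aeval t (Pq h (j+1))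
       ∧ 0 < Polynomial.aeval t (Pq h (j+1))) := by
  intro j
  induction j with
  | zero =>
    intro _
    rw [aeval_Pq_zero, aeval_Pq_one]
    push_cast
    refine ⟨one_pos, by nlinarith, by nlinarith [Nat.cast_nonneg (α := ℝ) h]⟩
  | succ n ih =>
    intro hn
    obtain ⟨h1, h2, h3⟩ := ih (by omega)
    have hcast : (2:ℝ) ≤ (h:ℝ) - n := by
      have : (n+2 : ℝ) ≤ (h:ℝ) := by exact_mod_cast hn
      linarith
    refine ⟨h3, ?_, ?_⟩ <;>
    · rw [aeval_Pq_rec]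
      push_cast
      set m : ℝ := (h:ℝ) - n with hm
      set P0 : ℝ := Polynomial.aeval t (Pq h n) with hP0
      set P1 : ℝ := Polynomial.aeval t (Pq h (n+1)) with hP1
      have key1 : ((2*m-1)*t) * ((2*m+3) * t * P0) ≤ ((2*m-1)*t) * P1 :=
        mul_le_mul_of_nonneg_left h2 (mul_nonneg (by linarith) ht.le)
      have c3 : (0:ℝ) < 16*(2*m+1)^2 := by nlinarith
      have key2 : 0 < (2*m-1) * ((2*m+3) * ((16*(2*m+1)^2) * P0)) :=
        mul_pos (by linarith) (mul_pos (by linarith) (mul_pos c3 h1))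
      have key3 : 0 < t * P1 := mul_pos ht h3
      try rw [show (h:ℝ) - (↑n+1) = m - 1 from by rw [hm]; ring]
      nlinarith [key1, key2, key3]

lemma Pq_pos (h : ℕ) (hh : 1 ≤ h) (t : ℝ) (ht : 0 < t) :
    ∀ j, j ≤ h → 0 < Polynomial.aeval t (Pq h j) := by
  intro j hj
  rcases Nat.lt_or_ge j h with hlt | hge
  · exact (Pq_posdom h hh t ht j (by omega)).1
  · obtain ⟨n, rfl⟩ : ∃ n, h = n + 1 := ⟨h-1, by omega⟩
    have hj' : j = n+1 := by omega
    subst hj'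
    exact (Pq_posdom (n+1) hh t ht n (by omega)).2.2

-- nonvanishing at nonzero real points (over ℂ)
lemma Pq_ne_zero_real (h : ℕ) (hh : 1 ≤ h) (t : ℝ) (ht : t ≠ 0) (j : ℕ) (hj : j ≤ h) :
    Polynomial.aeval ((t:ℂ)) (Pq h j) ≠ 0 := by
  rcases lt_or_gt_of_ne ht with hneg | hpos
  · have hne : Polynomial.aeval ((-t:ℝ):ℂ) (Pq h j) ≠ 0 := by
      rw [aeval_ofReal]
      exact_mod_cast (Pq_pos h hh (-t) (by linarith) j hj).ne'
    intro hcon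
    apply hne
    rw [show ((-t:ℝ):ℂ) = -((t:ℝ):ℂ) from by push_cast; ring, Pq_parity]
    rw [hcon]; ring
  · rw [aeval_ofReal]
    exact_mod_cast (Pq_pos h hh t hpos j hj).ne'

-- pairs do not vanish simultaneously at 0
lemma Pq_pair_zero (h : ℕ) :
    ∀ j, ¬(Polynomial.aeval (0:ℂ) (Pq h j) = 0 ∧ Polynomial.aeval (0:ℂ) (Pq h (j+1)) = 0) := by
  intro j
  induction j with
  | zero => rw [aeval_Pq_zero]; rintro ⟨hcon, -⟩; norm_num at hcon
  | succ n ih =>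
    rintro ⟨hz1, hz2⟩
    rw [aeval_Pq_rec, hz1] at hz2
    apply ih
    refine ⟨?_, hz1⟩
    have hc1 : (((2*((h:ℤ)-n)-1)*(2*((h:ℤ)-n)+3) : ℤ) : ℂ) ≠ 0 := by
      have o1 : ((2*((h:ℤ)-n)-1)*(2*((h:ℤ)-n)+3) : ℤ) ≠ 0 := by
        have : (2*((h:ℤ)-n)-1) ≠ 0 := by omega
        have : (2*((h:ℤ)-n)+3) ≠ 0 := by omega
        simp only [ne_eq, mul_eq_zero, not_or]; omega
      exact_mod_cast o1
    have hc2 : (((16*(2*((h:ℤ)-n)+1)^2 : ℤ) : ℂ) - (0:ℂ)^2) ≠ 0 := by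
      have o3 : (16*(2*((h:ℤ)-n)+1)^2 : ℤ) ≠ 0 := by
        have h0 : (2*((h:ℤ)-n)+1) ≠ 0 := by omega
        positivity
      intro hcon
      apply o3
      have hcc : (((16*(2*((h:ℤ)-n)+1)^2 : ℤ) : ℂ)) = 0 := by linear_combination hcon
      exact_mod_cast hcc
    have hsplit := mul_eq_zero.mp (show
        ((((2*((h:ℤ)-n)-1)*(2*((h:ℤ)-n)+3) : ℤ) : ℂ) * ((((16*(2*((h:ℤ)-n)+1)^2 : ℤ)) : ℂ) - (0:ℂ)^2))
          * Polynomial.aeval (0:ℂ) (Pq h n) = 0 from by linear_combination hz2)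
    rcases hsplit with hc | hgoal
    · rcases mul_eq_zero.mp hc with hc' | hc''
      · exact absurd hc' hc1
      · exact absurd hc'' hc2
    · exact hgoal

noncomputable def f1p (k : ℕ) : Polynomial ℤ :=
  Polynomial.C 16 * Polynomial.X * Pq (k+1) (k+1)
    - Polynomial.C 20 * (Polynomial.X^2 - Polynomial.C 144) * Pq (k+1) k
noncomputable def f2p (k : ℕ) : Polynomial ℤ :=
  (Polynomial.X^2 - Polynomial.C 16) * Pq (k+1) (k+1)

lemma sq_cases (z : ℂ) (r : ℝ) (hz : z^2 = ((r:ℝ):ℂ)^2) : z = (r:ℂ) ∨ z = ((-r:ℝ):ℂ) := by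
  have hfac : (z - (r:ℂ)) * (z + (r:ℂ)) = 0 := by linear_combination hz
  rcases mul_eq_zero.mp hfac with hc | hc
  · left; linear_combination hc
  · right; push_cast; linear_combination hc

-- descent: consecutive Pq have no common complex root
lemma Pq_pair_ne (h : ℕ) (hh : 1 ≤ h) (z : ℂ) :
    ∀ j, j + 1 ≤ h → ¬(Polynomial.aeval z (Pq h j) = 0 ∧ Polynomial.aeval z (Pq h (j+1)) = 0) := by
  intro j
  induction j with
  | zero => rw [aeval_Pq_zero]; rintro - ⟨hcon, -⟩; norm_num at hcon
  | succ n ih =>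
    intro hn
    rintro ⟨hz1, hz2⟩
    rw [aeval_Pq_rec, hz1, mul_zero, add_zero] at hz2
    rcases mul_eq_zero.mp hz2 with hc | hgoal
    · rcases mul_eq_zero.mp hc with hc1 | hc2
      · have o1 : ((2*((h:ℤ)-n)-1)*(2*((h:ℤ)-n)+3) : ℤ) ≠ 0 := by
          simp only [ne_eq, mul_eq_zero, not_or]; omega
        exact o1 (by exact_mod_cast hc1)
      · -- z^2 = 16(2m+1)^2, so z = ±4(2m+1) is a nonzero real
        have hzsq : z^2 = ((((4*(2*((h:ℤ)-n)+1) : ℤ) : ℝ) : ℂ))^2 := by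
          have : ((16*(2*((h:ℤ)-n)+1)^2 : ℤ) : ℂ) = z^2 := by linear_combination hc2
          rw [← this]; push_cast; ring
        have hne : ((4*(2*((h:ℤ)-n)+1) : ℤ) : ℝ) ≠ 0 := by
          have : (4*(2*((h:ℤ)-n)+1) : ℤ) ≠ 0 := by omega
          exact_mod_cast this
        rcases sq_cases z _ hzsq with rfl | rfl
        · exact Pq_ne_zero_real h hh _ hne (n+1) (by omega) hz1
        · exact Pq_ne_zero_real h hh _ (by simpa using hne) (n+1) (by omega) hz1
    · exact ih (by omega) ⟨hgoal, hz1⟩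

lemma noRoot (k : ℕ) (z : ℂ)
    (h1 : Polynomial.aeval z (f1p k) = 0) (h2 : Polynomial.aeval z (f2p k) = 0) : False := by
  have hh : 1 ≤ k+1 := by omega
  rw [f2p, map_mul, map_sub, map_pow, Polynomial.aeval_X, Polynomial.aeval_C, eq_intCast] at h2
  rw [f1p] at h1
  simp only [map_sub, map_mul, map_pow, Polynomial.aeval_X, Polynomial.aeval_C, eq_intCast, map_ofNat] at h1
  push_cast at h1
  rcases mul_eq_zero.mp h2 with hc | hPh
  · -- z = ±4
    have hzsq : z^2 = (((4:ℝ):ℂ))^2 := by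
      have hz2 : z^2 = ((16:ℤ):ℂ) := by linear_combination hc
      rw [hz2]; norm_num
    have pos1 : (0:ℝ) < Polynomial.aeval (4:ℝ) (Pq (k+1) (k+1)) :=
      Pq_pos (k+1) hh 4 (by norm_num) (k+1) (by omega)
    have pos2 : (0:ℝ) < Polynomial.aeval (4:ℝ) (Pq (k+1) k) :=
      Pq_pos (k+1) hh 4 (by norm_num) k (by omega)
    rcases sq_cases z 4 hzsq with rfl | rfl
    · have hre : ((16*4*Polynomial.aeval (4:ℝ) (Pq (k+1) (k+1))
          - 20*(4^2-144)*Polynomial.aeval (4:ℝ) (Pq (k+1) k) : ℝ) : ℂ) = 0 := by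
        push_cast
        rw [← aeval_ofReal, ← aeval_ofReal]
        push_cast at h1 ⊢
        linear_combination h1
      have hr0 := Complex.ofReal_eq_zero.mp hre
      nlinarith [pos1, pos2]
    · have hre : ((16*(-4)*Polynomial.aeval (-4:ℝ) (Pq (k+1) (k+1))
          - 20*((-4)^2-144)*Polynomial.aeval (-4:ℝ) (Pq (k+1) k) : ℝ) : ℂ) = 0 := by
        push_cast
        rw [← aeval_ofReal, ← aeval_ofReal]
        push_cast at h1 ⊢
        linear_combination h1
      have hr0 := Complex.ofReal_eq_zero.mp hre
      rw [show (-4:ℝ) = -(4:ℝ) from by norm_num, Pq_parity, Pq_parity] at hr0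
      have hfac : ((-1:ℝ))^k * (64*Polynomial.aeval (4:ℝ) (Pq (k+1) (k+1))
          + 2560*Polynomial.aeval (4:ℝ) (Pq (k+1) k)) = 0 := by
        rw [pow_succ] at hr0
        linear_combination hr0
      rcases mul_eq_zero.mp hfac with hcc | hcc
      · exact pow_ne_zero k (by norm_num : (-1:ℝ) ≠ 0) hcc
      · nlinarith [pos1, pos2]
  · -- P_h(z) = 0
    by_cases him : z.im = 0
    · have hzre : z = ((z.re : ℝ) : ℂ) := by
        apply Complex.ext <;> simp [him]
      by_cases hre0 : z.re = 0
      · -- z = 0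
        rw [hzre, hre0] at hPh h1
        norm_num at hPh h1
        -- h1 : -20 * (0 - 144) * aeval 0 (Pq (k+1) k) = 0 (after hPh)
        exact Pq_pair_zero (k+1) k ⟨h1, hPh⟩
      · rw [hzre] at hPh
        exact Pq_ne_zero_real (k+1) hh z.re hre0 (k+1) (by omega) hPh
    · -- z not real : from h1, (z^2-144) * P_k(z) = 0
      rw [hPh] at h1
      have hfac : (z^2 - ((144:ℤ):ℂ)) * Polynomial.aeval z (Pq (k+1) k) = 0 := by
        push_cast at h1 ⊢
        linear_combination (-1/20 : ℂ) * h1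
      rcases mul_eq_zero.mp hfac with hcc | hPk
      · have hzsq : z^2 = (((12:ℝ):ℂ))^2 := by
          have : z^2 = ((144:ℤ):ℂ) := by linear_combination hcc
          rw [this]; norm_num
        rcases sq_cases z 12 hzsq with rfl | rfl
        · simp at him
        · simp at him
      · exact Pq_pair_ne (k+1) hh z k (by omega) ⟨hPk, hPh⟩

lemma aeval_eq_eval_map (p : Polynomial ℤ) (z : ℂ) :
    Polynomial.aeval z p = Polynomial.eval z (p.map (algebraMap ℤ ℂ)) := by
  rw [Polynomial.aeval_def, Polynomial.eval₂_eq_eval_map]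

lemma f2p_map_ne (k : ℕ) : (f2p k).map (algebraMap ℤ ℂ) ≠ 0 := by
  intro hcon
  have h1 : Polynomial.aeval ((1:ℝ):ℂ) (f2p k) = 0 := by
    rw [aeval_eq_eval_map, hcon, Polynomial.eval_zero]
  rw [aeval_ofReal] at h1
  have h2 : Polynomial.aeval (1:ℝ) (f2p k) = 0 := by exact_mod_cast h1
  rw [f2p] at h2
  simp only [map_sub, map_mul, map_pow, Polynomial.aeval_X, Polynomial.aeval_C, eq_intCast,
    map_ofNat] at h2
  push_cast at h2
  have pos : (0:ℝ) < Polynomial.aeval (1:ℝ) (Pq (k+1) (k+1)) :=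
    Pq_pos (k+1) (by omega) 1 one_pos (k+1) le_rfl
  nlinarith [pos]

lemma coprime_f1_f2 (k : ℕ) :
    IsCoprime ((f1p k).map (algebraMap ℤ ℂ)) ((f2p k).map (algebraMap ℤ ℂ)) := by
  classical
  rw [← EuclideanDomain.gcd_isUnit_iff]
  by_contra hu
  set d := EuclideanDomain.gcd ((f1p k).map (algebraMap ℤ ℂ)) ((f2p k).map (algebraMap ℤ ℂ)) with hd
  have hd0 : d ≠ 0 := by
    intro hz
    exact f2p_map_ne k (EuclideanDomain.gcd_eq_zero_iff.mp hz).2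
  have hdeg : d.degree ≠ 0 := by
    intro hcon
    exact hu (Polynomial.isUnit_iff_degree_eq_zero.mpr hcon)
  have hdegpos : 0 < d.degree :=
    lt_of_le_of_ne (Polynomial.zero_le_degree_iff.mpr hd0) (Ne.symm hdeg)
  obtain ⟨z, hz⟩ := Complex.exists_root hdegpos
  have hdvd1 := EuclideanDomain.gcd_dvd_left ((f1p k).map (algebraMap ℤ ℂ)) ((f2p k).map (algebraMap ℤ ℂ))
  have hdvd2 := EuclideanDomain.gcd_dvd_right ((f1p k).map (algebraMap ℤ ℂ)) ((f2p k).map (algebraMap ℤ ℂ))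
  obtain ⟨q1, hq1⟩ := hdvd1
  obtain ⟨q2, hq2⟩ := hdvd2
  apply noRoot k z
  · rw [aeval_eq_eval_map, hq1, ← hd, Polynomial.eval_mul,
      show Polynomial.eval z d = 0 from hz, zero_mul]
  · rw [aeval_eq_eval_map, hq2, ← hd, Polynomial.eval_mul,
      show Polynomial.eval z d = 0 from hz, zero_mul]

lemma eh_mem (k : ℕ) : zm (2*(k+1)) ∈ Jm (2*(k+1)+1) := by
  obtain ⟨u, v, huv⟩ := coprime_f1_f2 k
  set θ : Polynomial ℂ →+* MvPolynomial (Fin 2) ℂ :=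
    Polynomial.eval₂RingHom (MvPolynomial.C : ℂ →+* MvPolynomial (Fin 2) ℂ) (X 0) with hθ
  have hcomp : ∀ p : Polynomial ℤ, θ (p.map (algebraMap ℤ ℂ)) = Phi p := by
    intro p
    rw [hθ, Phi]
    simp only [Polynomial.coe_eval₂RingHom]
    rw [Polynomial.eval₂_map]
    rfl
  have hone : (θ u) * Phi (f1p k) + (θ v) * Phi (f2p k) = 1 := by
    rw [← hcomp, ← hcomp, ← map_mul, ← map_mul, ← map_add, huv, map_one]
  have key : zm (2*(k+1)) = θ u * (Phi (f1p k) * zm (2*(k+1))) + θ v * (Phi (f2p k) * zm (2*(k+1))) := by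
    calc zm (2*(k+1)) = ((θ u) * Phi (f1p k) + (θ v) * Phi (f2p k)) * zm (2*(k+1)) := by
          rw [hone, one_mul]
      _ = θ u * (Phi (f1p k) * zm (2*(k+1))) + θ v * (Phi (f2p k) * zm (2*(k+1))) := by ring
  rw [key]
  refine (Jm _).add_mem ((Jm _).mul_mem_left _ ?_) ((Jm _).mul_mem_left _ ?_)
  · rw [f1p]; exact f1_rel k
  · rw [f2p]; exact f2_rel k

lemma Xmem (k : ℕ) : ∀ j, j ≤ k+1 → X 1^j * zm (2*(k+1-j)) ∈ Jm (2*(k+1)+1) := by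
  intro j hj
  have m := memP_all (k+1) (by omega) j hj
  unfold MemP at m
  apply mem_of_C_mul (c := (-1)^j * (Lq (k+1) j : ℂ)) (by
    have := Lq_pos (k+1) j hj
    simp only [ne_eq, mul_eq_zero, not_or]
    constructor
    · intro hcon; simp at hcon
    · exact_mod_cast this.ne')
  have key : C ((-1)^j * (Lq (k+1) j : ℂ)) * (X 1^j * zm (2*(k+1-j)))
      = (C ((-1)^j * (Lq (k+1) j : ℂ)) * X 1^j * zm (2*(k+1-j)) - Phi (Pq (k+1) j) * zm (2*(k+1)))
        + Phi (Pq (k+1) j) * zm (2*(k+1)) := by ring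
  rw [key]
  exact (Jm _).add_mem m ((Jm _).mul_mem_left _ (eh_mem k))

lemma zmZ_eq_zm (a : ℤ) (n : ℕ) (hn : a = n) : zmZ a = zm n := by
  subst hn; simp [zmZ]

lemma zmZ_eq_zero (a : ℤ) (ha : a < 0) : zmZ a = 0 := if_pos ha

lemma Jm_one_top : Jm 1 = ⊤ := by
  rw [Ideal.eq_top_iff_one]
  have hgen1 : zm 1 ∈ Jm 1 := Ideal.subset_span (by simp)
  have hgen2 : zm 2 ∈ Jm 1 := Ideal.subset_span (by norm_num [Set.mem_insert_iff])
  have key : (1 : MvPolynomial (Fin 2) ℂ)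
      = C (16⁻¹ : ℂ) * (X 0 * zm 1 - zm 2) := by
    rw [zm_one, zm_two]
    rw [show X 0 * X 0 - (X 0 * X 0 - C 16) = (C 16 : MvPolynomial (Fin 2) ℂ) from by ring]
    rw [← C_mul]
    norm_num
  rw [key]
  exact (Jm 1).mul_mem_left _ ((Jm 1).sub_mem ((Jm 1).mul_mem_left _ hgen1) hgen2)

/-- odd-index memberships: γ^(i+1) ζ_{2(k+1-i)-1} ∈ J for i+1 ≤ k+1 -/
lemma omem (k i : ℕ) (hi : i + 1 ≤ k + 1) :
    X 1^(i+1) * zm (2*(k+1-i)-1) ∈ Jm (2*(k+1)+1) := by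
  rcases Nat.lt_or_ge (i+1) (k+1) with hlt | hge
  · -- k+1-i ≥ 2
    obtain ⟨c, hc⟩ : ∃ c, k+1-i = c+2 := ⟨k+1-i-2, by omega⟩
    rw [hc, show 2*(c+2)-1 = 2*c+3 from by omega, zm_O c]
    have m1 : X 1^(i+1) * zm (2*c+2) ∈ Jm (2*(k+1)+1) := by
      have := Xmem k (i+1) (by omega)
      rwa [show 2*(k+1-(i+1)) = 2*c+2 from by omega] at this
    have m2 : X 1^(i+2) * zm (2*c) ∈ Jm (2*(k+1)+1) := by
      have := Xmem k (i+2) (by omega)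
      rwa [show 2*(k+1-(i+2)) = 2*c from by omega] at this
    have key : X 1^(i+1) * (X 0 * zm (2*c+2) + C (2*(2*(c:ℂ)+2)*(2*(c:ℂ)+1)) * X 1 * zm (2*c))
        = X 0 * (X 1^(i+1) * zm (2*c+2))
          + C (2*(2*(c:ℂ)+2)*(2*(c:ℂ)+1)) * (X 1^(i+2) * zm (2*c)) := by ring
    rw [key]
    exact (Jm _).add_mem ((Jm _).mul_mem_left _ m1) ((Jm _).mul_mem_left _ m2)
  · -- i = k : zm 1 = X 0
    have hik : i = k := by omega
    subst hik
    rw [show 2*(i+1-i)-1 = 1 from by omega, zm_one]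
    have := Xmem i (i+1) le_rfl
    rw [show 2*(i+1-(i+1)) = 0 from by omega] at this
    have key : X 1^(i+1) * X 0 = X 0 * (X 1^(i+1) * zm 0) := by
      rw [zm_zero]; ring
    rw [key]
    exact (Jm _).mul_mem_left _ this


/-- For g ≥ 1 odd and i ≥ 0:
    (i) there is a unit u mod J_g^- with u·γ^i ζ_{g−2i−1}^- ≡ γ^{i+1} ζ_{g−2i−2}^- (mod J_g^-);
    (ii) there is a unit v mod J_g^- with v·γ^i ζ_{g−2i−1}^- ≡ γ^{i+1} ζ_{g−2i−3}^- (mod J_g^-). -/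
theorem Jm_odd_units (g : ℕ) (hg : 1 ≤ g) (hodd : Odd g) (i : ℕ) :
    (∃ u : MvPolynomial (Fin 2) ℂ, IsUnit (Ideal.Quotient.mk (Jm g) u) ∧
      u * (X 1 : MvPolynomial (Fin 2) ℂ) ^ i * zmZ ((g : ℤ) - 2 * i - 1)
        - (X 1 : MvPolynomial (Fin 2) ℂ) ^ (i + 1) * zmZ ((g : ℤ) - 2 * i - 2) ∈ Jm g) ∧
    (∃ v : MvPolynomial (Fin 2) ℂ, IsUnit (Ideal.Quotient.mk (Jm g) v) ∧
      v * (X 1 : MvPolynomial (Fin 2) ℂ) ^ i * zmZ ((g : ℤ) - 2 * i - 1)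
        - (X 1 : MvPolynomial (Fin 2) ℂ) ^ (i + 1) * zmZ ((g : ℤ) - 2 * i - 3) ∈ Jm g) := by
  obtain ⟨m, rfl⟩ := hodd
  have hunit : IsUnit (Ideal.Quotient.mk (Jm (2*m+1)) 1) := by
    rw [map_one]; exact isUnit_one
  rcases Nat.eq_zero_or_pos m with rfl | hm
  · -- g = 1 : the ideal is the unit ideal
    norm_num
    have htop : Jm 1 = ⊤ := Jm_one_top
    exact ⟨⟨1, hunit, by rw [htop]; trivial⟩, ⟨1, hunit, by rw [htop]; trivial⟩⟩
  obtain ⟨k, rfl⟩ : ∃ k, m = k + 1 := ⟨m-1, by omega⟩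
  constructor
  · refine ⟨1, hunit, ?_⟩
    rcases Nat.lt_or_ge i (k+1) with hik | hik
    · -- i ≤ k : both indices nonnegative
      rw [zmZ_eq_zm _ (2*(k+1-i)) (by omega),
        zmZ_eq_zm _ (2*(k+1-i)-1) (by omega), one_mul]
      exact (Jm _).sub_mem (Xmem k i (by omega)) (omem k i (by omega))
    · rcases Nat.lt_or_ge i (k+2) with hik2 | hik2
      · -- i = k+1 : first index is 0, second negative
        have hik' : i = k+1 := by omega
        subst hik'
        rw [zmZ_eq_zm _ 0 (by omega), zmZ_eq_zero _ (by omega), one_mul,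
          mul_zero, sub_zero]
        have := Xmem k (k+1) le_rfl
        rwa [show 2*(k+1-(k+1)) = 0 from by omega] at this
      · -- i ≥ k+2 : both negative
        rw [zmZ_eq_zero _ (by omega), zmZ_eq_zero _ (by omega)]
        simp
  · refine ⟨1, hunit, ?_⟩
    rcases Nat.lt_or_ge i (k+1) with hik | hik
    · rw [zmZ_eq_zm _ (2*(k+1-i)) (by omega),
        zmZ_eq_zm _ (2*(k+1-(i+1))) (by omega),
        one_mul]
      exact (Jm _).sub_mem (Xmem k i (by omega)) (Xmem k (i+1) (by omega))
    · rcases Nat.lt_or_ge i (k+2) with hik2 | hik2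
      · have hik' : i = k+1 := by omega
        subst hik'
        rw [zmZ_eq_zm _ 0 (by omega), zmZ_eq_zero _ (by omega), one_mul,
          mul_zero, sub_zero]
        have := Xmem k (k+1) le_rfl
        rwa [show 2*(k+1-(k+1)) = 0 from by omega] at this
      · rw [zmZ_eq_zero _ (by omega), zmZ_eq_zero _ (by omega)]
        simp
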